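/- arXiv:2112.00253 — 5 statements merged into one kernel-verified Lean document; each statement's English description precedes it below -/
import Mathlib

section
/- Let γ > 0 be a real number. For every pair of real numbers R ≥ 0 and Q ≥ 0 with R + Q > 0, there exists a unique real number Z with Z ≥ R and Z > 0 satisfying (1 − R/Z) · Z^γ = Q, equivalently Z^γ − R · Z^{γ−1} = Q. -/
/-!
The closure `Z ↦ (1 - R/Z) Z^γ` vanishes at `Z = R`, is continuous on `[R, ∞)` and tends to `∞`,
so it takes every value `Q ≥ 0` there by the intermediate value theorem; the root is positive
because the closure vanishes at `Z = 0` while `R + Q > 0`. It is unique because on `Z ≥ R, Z > 0`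
the closure is a product of the nonnegative increasing factor `1 - R/Z` and the positive strictly
increasing factor `Z^γ`.
-/

open Filter Set

noncomputable def twoFluidClosure (γ R Z : ℝ) : ℝ := (1 - R / Z) * Z ^ γ

section

variable {γ R : ℝ}

theorem twoFluidClosure_self (hR : R ≠ 0) : twoFluidClosure γ R R = 0 := by
  simp [twoFluidClosure, div_self hR]

theorem twoFluidClosure_zero (hγ : γ ≠ 0) : twoFluidClosure γ R 0 = 0 := by
  simp [twoFluidClosure, Real.zero_rpow hγ]

theorem strictMonoOn_twoFluidClosure (hγ : 0 < γ) (hR : 0 ≤ R) :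
    StrictMonoOn (twoFluidClosure γ R) {Z | R ≤ Z ∧ 0 < Z} := by
  rintro a ⟨hRa, ha⟩ b ⟨-, hb⟩ hab
  have hpow_lt : a ^ γ < b ^ γ := Real.rpow_lt_rpow ha.le hab hγ
  rcases hR.eq_or_lt with rfl | hR
  · simpa [twoFluidClosure] using hpow_lt
  have hfactor_nonneg : 0 ≤ 1 - R / a := sub_nonneg.mpr ((div_le_one ha).mpr hRa)
  have hfactor_lt : 1 - R / a < 1 - R / b := by gcongr
  calc (1 - R / a) * a ^ γ ≤ (1 - R / a) * b ^ γ := by gcongr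
    _ < (1 - R / b) * b ^ γ := by gcongr

theorem continuousOn_twoFluidClosure (hγ : 0 ≤ γ) (hR : 0 ≤ R) :
    ContinuousOn (twoFluidClosure γ R) (Ici R) := by
  rcases hR.eq_or_lt with rfl | hR
  · have hclosure : twoFluidClosure γ 0 = fun Z => Z ^ γ := by
      funext Z
      simp [twoFluidClosure]
    exact hclosure ▸ continuousOn_id.rpow_const fun _ _ => Or.inr hγ
  · refine (continuousOn_const.sub (continuousOn_const.div continuousOn_id ?_)).mul
      (continuousOn_id.rpow_const fun _ _ => Or.inr hγ)
    exact fun Z hZ => (hR.trans_le hZ).ne'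

theorem tendsto_twoFluidClosure_atTop (hγ : 0 < γ) :
    Tendsto (twoFluidClosure γ R) atTop atTop := by
  have hfactor : Tendsto (fun Z : ℝ => 1 - R / Z) atTop (nhds 1) := by
    simpa using tendsto_const_nhds.sub ((tendsto_const_nhds (x := R)).div_atTop tendsto_id)
  exact hfactor.pos_mul_atTop one_pos (tendsto_rpow_atTop hγ)

theorem exists_twoFluidClosure_eq (hγ : 0 < γ) (hR : 0 ≤ R) {Q : ℝ} (hQ : 0 ≤ Q)
    (hRQ : 0 < R + Q) : ∃ Z, R ≤ Z ∧ 0 < Z ∧ twoFluidClosure γ R Z = Q := by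
  obtain ⟨M, hQM, hRM⟩ :=
    ((tendsto_twoFluidClosure_atTop (R := R) hγ).eventually_ge_atTop Q |>.and (eventually_ge_atTop R)).exists
  have hvalue_at_R : twoFluidClosure γ R R ≤ Q := by
    rcases hR.eq_or_lt with rfl | hR
    · simpa [twoFluidClosure_zero hγ.ne'] using hQ
    · simpa [twoFluidClosure_self hR.ne'] using hQ
  obtain ⟨Z, ⟨hRZ, -⟩, hZ⟩ := intermediate_value_Icc hRM
    ((continuousOn_twoFluidClosure hγ.le hR).mono Icc_subset_Ici_self) ⟨hvalue_at_R, hQM⟩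
  refine ⟨Z, hRZ, (hR.trans hRZ).lt_of_ne fun hZ0 => ?_, hZ⟩
  subst hZ0
  have hQ0 : Q = 0 := by rw [← hZ, twoFluidClosure_zero hγ.ne']
  linarith

end

/-- Existence and uniqueness of the algebraic pressure variable `Z`: for `γ > 0`
and densities `R ≥ 0`, `Q ≥ 0` with `R + Q > 0`, there is a unique `Z ≥ R`,
`Z > 0` with `(1 − R/Z) Z^γ = Q`, i.e. `Z^γ − R Z^{γ−1} = Q`. -/
theorem two_fluid_pressure_exists_unique
    (γ : ℝ) (hγ : 0 < γ)
    (R Q : ℝ) (hR : 0 ≤ R) (hQ : 0 ≤ Q) (hRQ : 0 < R + Q) :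
    ∃! Z : ℝ, R ≤ Z ∧ 0 < Z ∧ (1 - R / Z) * Z ^ γ = Q := by
  obtain ⟨Z, hZ, hZ_pos, hZ_eq⟩ := exists_twoFluidClosure_eq hγ hR hQ hRQ
  refine ⟨Z, ⟨hZ, hZ_pos, hZ_eq⟩, fun Y ⟨hY, hY_pos, hY_eq⟩ => ?_⟩
  exact (strictMonoOn_twoFluidClosure hγ hR).injOn ⟨hY, hY_pos⟩ ⟨hZ, hZ_pos⟩
    (hY_eq.trans hZ_eq.symm)
end

section
/- Let γ > 0 and let R ≥ 0, Q ≥ 0 with R + Q > 0. If Z > 0 is the unique number with Z ≥ R and (1 − R/Z) · Z^γ = Q, then max{ R, Q^{1/γ} } ≤ Z ≤ max{ 2R, (2Q)^{1/γ} }. -/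
lemma one_sub_div_mul_le_self {R Z w : ℝ} (hR : 0 ≤ R) (hZ : 0 < Z) (hw : 0 ≤ w) :
    (1 - R / Z) * w ≤ w := by
  have : 0 ≤ R / Z * w := by positivity
  linarith

lemma le_two_mul_one_sub_div_mul {R Z w : ℝ} (hZ : 0 < Z) (hRZ : 2 * R ≤ Z) (hw : 0 ≤ w) :
    w ≤ 2 * ((1 - R / Z) * w) := by
  have hhalf : R / Z ≤ 1 / 2 := by
    rw [div_le_div_iff₀ hZ two_pos]
    linarith
  nlinarith

theorem two_fluid_pressure_bounds_general
    (γ : ℝ) (hγ : 0 < γ)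
    (R Q Z : ℝ) (hR : 0 ≤ R) (hQ : 0 ≤ Q)
    (hZR : R ≤ Z) (hZ : 0 < Z) (hZeq : (1 - R / Z) * Z ^ γ = Q) :
    max R (Q ^ (1 / γ)) ≤ Z ∧ Z ≤ max (2 * R) ((2 * Q) ^ (1 / γ)) := by
  rw [one_div]
  have hZγ : 0 ≤ Z ^ γ := by positivity
  refine ⟨max_le hZR ?_, ?_⟩
  · rw [Real.rpow_inv_le_iff_of_pos hQ hZ.le hγ, ← hZeq]
    exact one_sub_div_mul_le_self hR hZ hZγ
  · rcases le_or_gt Z (2 * R) with hsmall | hlarge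
    · exact le_max_of_le_left hsmall
    · refine le_max_of_le_right ?_
      rw [Real.le_rpow_inv_iff_of_pos hZ.le (by positivity) hγ, ← hZeq]
      exact le_two_mul_one_sub_div_mul hZ hlarge.le hZγ

/-- Bounds on the algebraic pressure variable: if `Z ≥ R`, `Z > 0` satisfies
`(1 − R/Z) Z^γ = Q` with `R, Q ≥ 0`, `R + Q > 0`, then
`max{R, Q^{1/γ}} ≤ Z ≤ max{2R, (2Q)^{1/γ}}`. -/
theorem two_fluid_pressure_bounds
    (γ : ℝ) (hγ : 0 < γ)
    (R Q Z : ℝ) (hR : 0 ≤ R) (hQ : 0 ≤ Q) (hRQ : 0 < R + Q)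
    (hZR : R ≤ Z) (hZ : 0 < Z) (hZeq : (1 - R / Z) * Z ^ γ = Q) :
    max R (Q ^ (1 / γ)) ≤ Z ∧ Z ≤ max (2 * R) ((2 * Q) ^ (1 / γ)) :=
  two_fluid_pressure_bounds_general γ hγ R Q Z hR hQ hZR hZ hZeq
end

section
/- Let γ₊ and γ₋ be real numbers with 1 ≤ γ₊ ≤ γ₋, set γ = γ₊/γ₋, and let M > 0. There exists a constant C = C(M, γ₊, γ₋) > 0 such that for all pairs (R,Q) and (R̃,Q̃) in [0,M] × [0,M] with R + Q > 0 and R̃ + Q̃ > 0, one has | Z(R,Q)^{γ₊} − Z(R̃,Q̃)^{γ₊} | ≤ C ( |R − R̃| + |Q − Q̃| ). -/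
/-!
Writing the defining relation as `Z = R + Q Z^{1-γ}` and subtracting it at two states gives
`Z - Z̃ = (R - R̃) + (Q - Q̃) Z^{1-γ} + Q̃ (Z^{1-γ} - Z̃^{1-γ})`. By concavity of `t ↦ t^{1-γ}`
the last term is at most `(1 - γ) Q̃ Z̃^{-γ} (Z - Z̃) ≤ (1 - γ)(Z - Z̃)`, because `Q̃ Z̃^{-γ} = 1 - R̃/Z̃`.
Hence `γ (Z - Z̃)` is controlled by the data, `Z` itself is bounded (`Z^γ ≤ max 1 (R + Q)`),
and `t ↦ t^{γ₊}` is Lipschitz on bounded sets since `γ₊ ≥ 1`.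
-/

open Real

namespace Real

lemma rpow_sub_rpow_le_mul_rpow_sub_one_of_one_le {p x y : ℝ} (hp : 1 ≤ p) (hy : 0 ≤ y)
    (hyx : y ≤ x) : x ^ p - y ^ p ≤ p * x ^ (p - 1) * (x - y) := by
  rcases hyx.eq_or_lt with rfl | hlt
  · simp
  have hslope := (convexOn_rpow hp).slope_le_of_hasDerivAt (Set.mem_Ici.2 hy)
    (Set.mem_Ici.2 (hy.trans hlt.le)) hlt (hasDerivAt_rpow_const (Or.inr hp))
  rwa [slope_def_field, div_le_iff₀ (sub_pos.2 hlt)] at hslope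

lemma rpow_sub_rpow_le_mul_rpow_sub_one_of_le_one {q x y : ℝ} (hq₀ : 0 ≤ q) (hq₁ : q ≤ 1)
    (hy : 0 < y) (hyx : y ≤ x) : x ^ q - y ^ q ≤ q * y ^ (q - 1) * (x - y) := by
  rcases hyx.eq_or_lt with rfl | hlt
  · simp
  have hslope := (concaveOn_rpow hq₀ hq₁).slope_le_of_hasDerivAt (Set.mem_Ici.2 hy.le)
    (Set.mem_Ici.2 (hy.le.trans hlt.le)) hlt (hasDerivAt_rpow_const (Or.inl hy.ne'))
  rwa [slope_def_field, div_le_iff₀ (sub_pos.2 hlt)] at hslope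

end Real

namespace TwoFluid

def IsSolution (γ R Q Z : ℝ) : Prop := 0 < Z ∧ (1 - R / Z) * Z ^ γ = Q

namespace IsSolution

variable {γ R Q Z R' Q' Z' : ℝ}

lemma rpow_eq (h : IsSolution γ R Q Z) : Z ^ γ = R * Z ^ (γ - 1) + Q := by
  obtain ⟨hZ, hQ⟩ := h
  rw [← hQ, rpow_sub_one hZ.ne']
  ring

lemma eq_add_mul_rpow (h : IsSolution γ R Q Z) : Z = R + Q * Z ^ (1 - γ) := by
  have hsplit : Z ^ γ * Z ^ (1 - γ) = Z := by
    rw [← rpow_add h.1, add_sub_cancel, rpow_one]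
  rw [← h.2, mul_assoc, hsplit, sub_mul, div_mul_cancel₀ _ h.1.ne']
  ring

lemma mul_rpow_neg_le_one (h : IsSolution γ R Q Z) (hR : 0 ≤ R) : Q * Z ^ (-γ) ≤ 1 := by
  obtain ⟨hZ, hQ⟩ := h
  have hcancel : Z ^ γ * Z ^ (-γ) = 1 := by rw [← rpow_add hZ, add_neg_cancel, rpow_zero]
  calc Q * Z ^ (-γ) = 1 - R / Z := by rw [← hQ, mul_assoc, hcancel, mul_one]
    _ ≤ 1 := sub_le_self _ (div_nonneg hR hZ.le)

lemma le_max_one_rpow_inv (h : IsSolution γ R Q Z) (hγ₀ : 0 < γ) (hγ₁ : γ ≤ 1) (hR : 0 ≤ R) :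
    Z ≤ max 1 (R + Q) ^ γ⁻¹ := by
  rw [le_rpow_inv_iff_of_pos h.1.le (zero_le_one.trans (le_max_left _ _)) hγ₀]
  rcases le_total Z 1 with hZ1 | hZ1
  · exact (rpow_le_one h.1.le hZ1 hγ₀.le).trans (le_max_left _ _)
  · have hRZ : R * Z ^ (γ - 1) ≤ R :=
      mul_le_of_le_one_right hR (rpow_le_one_of_one_le_of_nonpos hZ1 (by linarith))
    rw [h.rpow_eq]
    exact le_trans (by linarith) (le_max_right _ _)

lemma mul_sub_le (h : IsSolution γ R Q Z) (h' : IsSolution γ R' Q' Z') (hγ₀ : 0 ≤ γ)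
    (hγ₁ : γ ≤ 1) (hR' : 0 ≤ R') (hQ' : 0 ≤ Q') (hZZ' : Z' ≤ Z) :
    γ * (Z - Z') ≤ R - R' + (Q - Q') * Z ^ (1 - γ) := by
  have hconc : Z ^ (1 - γ) - Z' ^ (1 - γ) ≤ (1 - γ) * Z' ^ (-γ) * (Z - Z') := by
    simpa using rpow_sub_rpow_le_mul_rpow_sub_one_of_le_one (q := 1 - γ) (by linarith) (by linarith)
      h'.1 hZZ'
  have hQ'Z' := h'.mul_rpow_neg_le_one hR'
  have hcross : Q' * (Z ^ (1 - γ) - Z' ^ (1 - γ)) ≤ (1 - γ) * (Z - Z') :=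
    calc Q' * (Z ^ (1 - γ) - Z' ^ (1 - γ))
        ≤ Q' * ((1 - γ) * Z' ^ (-γ) * (Z - Z')) := mul_le_mul_of_nonneg_left hconc hQ'
      _ = (Q' * Z' ^ (-γ)) * ((1 - γ) * (Z - Z')) := by ring
      _ ≤ (1 - γ) * (Z - Z') :=
        mul_le_of_le_one_left (mul_nonneg (by linarith) (by linarith)) hQ'Z'
  linear_combination h.eq_add_mul_rpow - h'.eq_add_mul_rpow + hcross

lemma rpow_sub_rpow_le {p Zm : ℝ} (h : IsSolution γ R Q Z) (h' : IsSolution γ R' Q' Z')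
    (hγ₀ : 0 < γ) (hγ₁ : γ ≤ 1) (hp : 1 ≤ p) (hR' : 0 ≤ R') (hQ' : 0 ≤ Q') (hZm : 1 ≤ Zm)
    (hZ : Z ≤ Zm) : Z ^ p - Z' ^ p ≤ p * Zm ^ (p - γ) / γ * (|R - R'| + |Q - Q'|) := by
  have hbound : 0 ≤ p * Zm ^ (p - γ) / γ * (|R - R'| + |Q - Q'|) := by positivity
  rcases le_total Z Z' with hZZ' | hZZ'
  · linarith [rpow_le_rpow h.1.le hZZ' (by linarith : 0 ≤ p)]
  have hK : 1 ≤ Zm ^ (1 - γ) := one_le_rpow hZm (by linarith)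
  have hZK : Z ^ (1 - γ) ≤ Zm ^ (1 - γ) := rpow_le_rpow h.1.le hZ (by linarith)
  have hdiff : γ * (Z - Z') ≤ Zm ^ (1 - γ) * (|R - R'| + |Q - Q'|) := by
    have hQterm : (Q - Q') * Z ^ (1 - γ) ≤ |Q - Q'| * Zm ^ (1 - γ) :=
      mul_le_mul (le_abs_self _) hZK (rpow_nonneg h.1.le _) (abs_nonneg _)
    linarith [h.mul_sub_le h' hγ₀.le hγ₁ hR' hQ' hZZ', le_abs_self (R - R'),
      le_mul_of_one_le_left (abs_nonneg (R - R')) hK]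
  have hpow : Z ^ (p - 1) ≤ Zm ^ (p - 1) := rpow_le_rpow h.1.le hZ (by linarith)
  have hsplit : Zm ^ (p - γ) = Zm ^ (p - 1) * Zm ^ (1 - γ) := by
    rw [← rpow_add (by linarith)]
    ring_nf
  calc Z ^ p - Z' ^ p ≤ p * Z ^ (p - 1) * (Z - Z') :=
        rpow_sub_rpow_le_mul_rpow_sub_one_of_one_le hp h'.1.le hZZ'
    _ ≤ p * Zm ^ (p - 1) * (Z - Z') := by gcongr
    _ = p * Zm ^ (p - 1) / γ * (γ * (Z - Z')) := by field_simp
    _ ≤ p * Zm ^ (p - 1) / γ * (Zm ^ (1 - γ) * (|R - R'| + |Q - Q'|)) := by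
        gcongr
    _ = p * Zm ^ (p - γ) / γ * (|R - R'| + |Q - Q'|) := by rw [hsplit]; ring

end IsSolution

end TwoFluid

theorem two_fluid_pressure_lipschitz_general
    (γp γm M : ℝ) (hγp : 1 ≤ γp) (hγpm : γp ≤ γm) :
    ∃ C : ℝ, 0 < C ∧
      ∀ R Q R' Q' Z Z' : ℝ,
        R ∈ Set.Icc 0 M → Q ∈ Set.Icc 0 M →
        R' ∈ Set.Icc 0 M → Q' ∈ Set.Icc 0 M →
        0 < R + Q → 0 < R' + Q' →
        (R ≤ Z ∧ 0 < Z ∧ (1 - R / Z) * Z ^ (γp / γm) = Q) →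
        (R' ≤ Z' ∧ 0 < Z' ∧ (1 - R' / Z') * Z' ^ (γp / γm) = Q') →
        |Z ^ γp - Z' ^ γp| ≤ C * (|R - R'| + |Q - Q'|) := by
  set γ := γp / γm
  have hγ₀ : 0 < γ := div_pos (by linarith) (by linarith)
  have hγ₁ : γ ≤ 1 := div_le_one_of_le₀ hγpm (by linarith)
  set Zm := max 1 (2 * M) ^ γ⁻¹
  have hZm : 1 ≤ Zm := one_le_rpow (le_max_left _ _) (inv_nonneg.2 hγ₀.le)
  have hbound : ∀ {R Q Z}, R ∈ Set.Icc 0 M → Q ∈ Set.Icc 0 M →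
      TwoFluid.IsSolution γ R Q Z → Z ≤ Zm :=
    fun hR hQ h ↦ (h.le_max_one_rpow_inv hγ₀ hγ₁ hR.1).trans <|
      rpow_le_rpow (zero_le_one.trans (le_max_left _ _))
        (max_le_max le_rfl (by linarith [hR.2, hQ.2])) (inv_nonneg.2 hγ₀.le)
  refine ⟨γp * Zm ^ (γp - γ) / γ, by positivity, ?_⟩
  intro R Q R' Q' Z Z' hR hQ hR' hQ' _ _ ⟨_, hZ⟩ ⟨_, hZ'⟩
  refine abs_sub_le_iff.2 ⟨?_, ?_⟩
  · exact TwoFluid.IsSolution.rpow_sub_rpow_le hZ hZ' hγ₀ hγ₁ hγp hR'.1 hQ'.1 hZm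
      (hbound hR hQ hZ)
  · rw [abs_sub_comm R, abs_sub_comm Q]
    exact TwoFluid.IsSolution.rpow_sub_rpow_le hZ' hZ hγ₀ hγ₁ hγp hR.1 hQ.1 hZm
      (hbound hR' hQ' hZ')

/-- Lipschitz continuity of the pressure `p(Z) = Z^{γ₊}` as a function of the two
densities on bounded sets: for `1 ≤ γ₊ ≤ γ₋`, `γ = γ₊/γ₋`, and `M > 0`, there is
`C = C(M, γ₊, γ₋) > 0` such that
`|Z(R,Q)^{γ₊} − Z(R̃,Q̃)^{γ₊}| ≤ C (|R − R̃| + |Q − Q̃|)` whenever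
`(R,Q), (R̃,Q̃) ∈ [0,M]²` with `R + Q > 0`, `R̃ + Q̃ > 0`. -/
theorem two_fluid_pressure_lipschitz
    (γp γm M : ℝ) (hγp : 1 ≤ γp) (hγpm : γp ≤ γm) (hM : 0 < M) :
    ∃ C : ℝ, 0 < C ∧
      ∀ R Q R' Q' Z Z' : ℝ,
        R ∈ Set.Icc 0 M → Q ∈ Set.Icc 0 M →
        R' ∈ Set.Icc 0 M → Q' ∈ Set.Icc 0 M →
        0 < R + Q → 0 < R' + Q' →
        (R ≤ Z ∧ 0 < Z ∧ (1 - R / Z) * Z ^ (γp / γm) = Q) →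
        (R' ≤ Z' ∧ 0 < Z' ∧ (1 - R' / Z') * Z' ^ (γp / γm) = Q') →
        |Z ^ γp - Z' ^ γp| ≤ C * (|R - R'| + |Q - Q'|) :=
  two_fluid_pressure_lipschitz_general γp γm M hγp hγpm
end

section
/- Let γ₊ and γ₋ be real numbers with 1 ≤ γ₊ ≤ γ₋, set γ = γ₊/γ₋, and let M > 0. Let (X, μ) be a finite measure space and let R, Q, R̃, Q̃ : X → [0,M] be measurable functions with R(x) + Q(x) > 0 and R̃(x) + Q̃(x) > 0 for all x. Then there exists a constant C = C(M, γ₊, γ₋) > 0, independent of the functions, such that ‖ Z(R,Q)^{γ₊} − Z(R̃,Q̃)^{γ₊} ‖_{L²(μ)} ≤ C ( ‖ R − R̃ ‖_{L²(μ)} + ‖ Q − Q̃ ‖_{L²(μ)} ). -/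
/-!
Writing the defining relation as `Z - R = Q Z^(1-γ)`, concavity of `t ↦ t^(1-γ)` together
with `Q' Z'^(-γ) = 1 - R'/Z' ≤ 1` gives `γ |Z - Z'| ≤ |R - R'| + B^(1-γ) |Q - Q'|`, where
`Z ≤ B := max 1 (2M) ^ (1/γ)` because `Z^γ = Q + R Z^(γ-1)`. As `t ↦ t^γ₊` is
`γ₊ B^(γ₊-1)`-Lipschitz on `(0, B]`, the map `(R, Q) ↦ Z^γ₊` is pointwise Lipschitz with a
constant depending only on `M, γ₊, γ₋`, and the triangle inequality in `L²` concludes.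
-/

open MeasureTheory Real

namespace Real

variable {a b p : ℝ}

lemma rpow_add_mul_rpow_sub_one_mul_sub (ha : 0 < a) :
    a ^ p + p * a ^ (p - 1) * (b - a) = a ^ p * (1 + p * (b / a - 1)) := by
  rw [rpow_sub_one ha.ne']
  field_simp

lemma rpow_eq_rpow_mul_one_add_rpow (ha : 0 < a) (hb : 0 ≤ b) :
    b ^ p = a ^ p * (1 + (b / a - 1)) ^ p := by
  rw [add_sub_cancel, div_rpow hb ha.le, mul_div_cancel₀ _ (rpow_pos_of_pos ha p).ne']

lemma rpow_add_mul_rpow_sub_one_mul_sub_le (ha : 0 < a) (hb : 0 ≤ b) (hp : 1 ≤ p) :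
    a ^ p + p * a ^ (p - 1) * (b - a) ≤ b ^ p := by
  have hs : -1 ≤ b / a - 1 := by linarith [div_nonneg hb ha.le]
  rw [rpow_add_mul_rpow_sub_one_mul_sub ha, rpow_eq_rpow_mul_one_add_rpow ha hb]
  exact mul_le_mul_of_nonneg_left (one_add_mul_self_le_rpow_one_add hs hp) (rpow_nonneg ha.le p)

lemma rpow_le_rpow_add_mul_rpow_sub_one_mul_sub (ha : 0 < a) (hb : 0 ≤ b) (hp₀ : 0 ≤ p)
    (hp₁ : p ≤ 1) : b ^ p ≤ a ^ p + p * a ^ (p - 1) * (b - a) := by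
  have hs : -1 ≤ b / a - 1 := by linarith [div_nonneg hb ha.le]
  rw [rpow_add_mul_rpow_sub_one_mul_sub ha, rpow_eq_rpow_mul_one_add_rpow ha hb]
  exact mul_le_mul_of_nonneg_left (rpow_one_add_le_one_add_mul_self hs hp₀ hp₁)
    (rpow_nonneg ha.le p)

lemma abs_rpow_sub_rpow_le_mul_abs_sub {x y B : ℝ} (hp : 1 ≤ p) (hx : 0 < x) (hy : 0 < y)
    (hxB : x ≤ B) (hyB : y ≤ B) : |x ^ p - y ^ p| ≤ p * B ^ (p - 1) * |x - y| := by
  wlog hyx : y ≤ x generalizing x y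
  · rw [abs_sub_comm, abs_sub_comm x]
    exact this hy hx hyB hxB (le_of_not_ge hyx)
  have hmono : y ^ p ≤ x ^ p := rpow_le_rpow hy.le hyx (by linarith)
  rw [abs_of_nonneg (sub_nonneg.2 hmono), abs_of_nonneg (sub_nonneg.2 hyx)]
  calc x ^ p - y ^ p ≤ p * x ^ (p - 1) * (x - y) := by
        linarith [rpow_add_mul_rpow_sub_one_mul_sub_le hx hy.le hp]
    _ ≤ p * B ^ (p - 1) * (x - y) := by
        gcongr

end Real

section PressureEquation

variable {γ r q z r' q' z' : ℝ}

lemma sub_eq_mul_rpow_one_sub_of_pressure (hz : 0 < z) (h : (1 - r / z) * z ^ γ = q) :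
    z - r = q * z ^ (1 - γ) := by
  rw [← h, mul_assoc, ← rpow_add hz, add_sub_cancel, rpow_one, sub_mul, one_mul,
    div_mul_cancel₀ _ hz.ne']

lemma mul_rpow_neg_le_one_of_pressure (hr : 0 ≤ r) (hz : 0 < z)
    (h : (1 - r / z) * z ^ γ = q) : q * z ^ (-γ) ≤ 1 := by
  rw [← h, mul_assoc, ← rpow_add hz, add_neg_cancel, rpow_zero, mul_one]
  linarith [div_nonneg hr hz.le]

lemma rpow_le_max_one_add_of_pressure (hγ₀ : 0 ≤ γ) (hγ₁ : γ ≤ 1) (hr : 0 ≤ r) (hz : 0 < z)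
    (h : (1 - r / z) * z ^ γ = q) : z ^ γ ≤ max 1 (r + q) := by
  rcases le_or_gt z 1 with hz₁ | hz₁
  · exact (rpow_le_one hz.le hz₁ hγ₀).trans (le_max_left _ _)
  · have hq : z ^ γ - r * z ^ (γ - 1) = q := by
      rw [← h, rpow_sub_one hz.ne']
      ring
    have : r * z ^ (γ - 1) ≤ r :=
      mul_le_of_le_one_right hr (rpow_le_one_of_one_le_of_nonpos hz₁.le (by linarith))
    exact le_max_of_le_right (by linarith)

lemma mul_sub_le_of_pressure (hγ₀ : 0 ≤ γ) (hγ₁ : γ ≤ 1) (hr' : 0 ≤ r') (hq' : 0 ≤ q')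
    (hz : 0 < z) (h : (1 - r / z) * z ^ γ = q) (hz' : 0 < z') (h' : (1 - r' / z') * z' ^ γ = q')
    (hz'z : z' ≤ z) : γ * (z - z') ≤ (r - r') + (q - q') * z ^ (1 - γ) := by
  -- concavity of `t ↦ t ^ (1 - γ)`, with the slope `q' * z' ^ (-γ)` at `z'` bounded by 1
  have hconc : z ^ (1 - γ) - z' ^ (1 - γ) ≤ (1 - γ) * z' ^ (-γ) * (z - z') := by
    have := rpow_le_rpow_add_mul_rpow_sub_one_mul_sub (p := 1 - γ) hz' hz.le
      (by linarith) (by linarith)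
    rw [show 1 - γ - 1 = -γ by ring] at this
    linarith
  have hslope : q' * (z ^ (1 - γ) - z' ^ (1 - γ)) ≤ (1 - γ) * (z - z') :=
    calc q' * (z ^ (1 - γ) - z' ^ (1 - γ))
        ≤ q' * ((1 - γ) * z' ^ (-γ) * (z - z')) := mul_le_mul_of_nonneg_left hconc hq'
      _ = (1 - γ) * (z - z') * (q' * z' ^ (-γ)) := by ring
      _ ≤ (1 - γ) * (z - z') :=
        mul_le_of_le_one_right (mul_nonneg (by linarith) (by linarith))
          (mul_rpow_neg_le_one_of_pressure hr' hz' h')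
  have hfix := sub_eq_mul_rpow_one_sub_of_pressure hz h
  have hfix' := sub_eq_mul_rpow_one_sub_of_pressure hz' h'
  linear_combination hfix - hfix' + hslope

end PressureEquation

noncomputable def pressureBound (γ M : ℝ) : ℝ := max 1 (2 * M) ^ γ⁻¹

noncomputable def pressureLipschitzConst (p γ M : ℝ) : ℝ := p * pressureBound γ M ^ (p - γ) / γ

lemma one_le_pressureBound {γ : ℝ} (M : ℝ) (hγ : 0 ≤ γ) : 1 ≤ pressureBound γ M :=
  one_le_rpow (le_max_left _ _) (inv_nonneg.2 hγ)

lemma pressureLipschitzConst_pos {p γ : ℝ} (M : ℝ) (hp : 0 < p) (hγ : 0 < γ) :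
    0 < pressureLipschitzConst p γ M := by
  have := one_le_pressureBound M hγ.le
  unfold pressureLipschitzConst
  positivity

section PressureEquation

variable {γ M r q z r' q' z' : ℝ}

lemma le_pressureBound (hγ₀ : 0 < γ) (hγ₁ : γ ≤ 1) (hr : r ∈ Set.Icc 0 M) (hq : q ≤ M)
    (hz : 0 < z) (h : (1 - r / z) * z ^ γ = q) : z ≤ pressureBound γ M := by
  refine (le_rpow_inv_iff_of_pos hz.le (by positivity) hγ₀).2 ?_
  exact (rpow_le_max_one_add_of_pressure hγ₀.le hγ₁ hr.1 hz h).trans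
    (max_le_max le_rfl (by linarith [hr.2]))

lemma mul_abs_sub_le_of_pressure {B : ℝ} (hγ₀ : 0 ≤ γ) (hγ₁ : γ ≤ 1) (hr : 0 ≤ r) (hq : 0 ≤ q)
    (hr' : 0 ≤ r') (hq' : 0 ≤ q') (hz : 0 < z) (h : (1 - r / z) * z ^ γ = q) (hz' : 0 < z')
    (h' : (1 - r' / z') * z' ^ γ = q') (hB : 1 ≤ B) (hzB : z ≤ B) (hz'B : z' ≤ B) :
    γ * |z - z'| ≤ B ^ (1 - γ) * (|r - r'| + |q - q'|) := by
  wlog hz'z : z' ≤ z generalizing r q z r' q' z'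
  · rw [abs_sub_comm, abs_sub_comm r, abs_sub_comm q]
    exact this hr' hq' hr hq hz' h' hz h hz'B hzB (le_of_not_ge hz'z)
  have hzγ : z ^ (1 - γ) ≤ B ^ (1 - γ) := rpow_le_rpow hz.le hzB (by linarith)
  have hBγ : 1 ≤ B ^ (1 - γ) := one_le_rpow hB (by linarith)
  calc γ * |z - z'| = γ * (z - z') := by rw [abs_of_nonneg (sub_nonneg.2 hz'z)]
    _ ≤ (r - r') + (q - q') * z ^ (1 - γ) :=
        mul_sub_le_of_pressure hγ₀ hγ₁ hr' hq' hz h hz' h' hz'z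
    _ ≤ |r - r'| + |q - q'| * B ^ (1 - γ) := by
        gcongr
        · exact le_abs_self _
        · exact le_abs_self _
    _ ≤ B ^ (1 - γ) * (|r - r'| + |q - q'|) := by
        nlinarith [abs_nonneg (r - r'), abs_nonneg (q - q')]

lemma abs_rpow_sub_rpow_le_of_pressure {p : ℝ} (hγ₀ : 0 < γ) (hγ₁ : γ ≤ 1) (hp : 1 ≤ p)
    (hr : r ∈ Set.Icc 0 M) (hq : q ∈ Set.Icc 0 M) (hr' : r' ∈ Set.Icc 0 M)
    (hq' : q' ∈ Set.Icc 0 M) (hz : 0 < z) (h : (1 - r / z) * z ^ γ = q) (hz' : 0 < z')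
    (h' : (1 - r' / z') * z' ^ γ = q') :
    |z ^ p - z' ^ p| ≤ pressureLipschitzConst p γ M * (|r - r'| + |q - q'|) := by
  set B := pressureBound γ M
  have hB := one_le_pressureBound M hγ₀.le
  have hzB : z ≤ B := le_pressureBound hγ₀ hγ₁ hr hq.2 hz h
  have hz'B : z' ≤ B := le_pressureBound hγ₀ hγ₁ hr' hq'.2 hz' h'
  have hdiff : |z - z'| ≤ B ^ (1 - γ) * (|r - r'| + |q - q'|) / γ := by
    rw [le_div_iff₀ hγ₀, mul_comm]
    exact mul_abs_sub_le_of_pressure hγ₀.le hγ₁ hr.1 hq.1 hr'.1 hq'.1 hz h hz' h' hB hzB hz'B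
  calc |z ^ p - z' ^ p| ≤ p * B ^ (p - 1) * |z - z'| :=
        abs_rpow_sub_rpow_le_mul_abs_sub hp hz hz' hzB hz'B
    _ ≤ p * B ^ (p - 1) * (B ^ (1 - γ) * (|r - r'| + |q - q'|) / γ) := by gcongr
    _ = pressureLipschitzConst p γ M * (|r - r'| + |q - q'|) := by
        have hBpow : B ^ (p - 1) * B ^ (1 - γ) = B ^ (p - γ) := by
          rw [← rpow_add (by linarith)]
          ring_nf
        rw [pressureLipschitzConst, ← hBpow]
        ring

end PressureEquation

theorem MeasureTheory.eLpNorm_le_ofReal_mul_add {α E F G : Type*} [MeasurableSpace α]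
    {μ : Measure α} [NormedAddCommGroup E] [NormedAddCommGroup F] [NormedAddCommGroup G]
    {f : α → E} {g : α → F} {h : α → G} {c : ℝ} {p : ENNReal}
    (hg : AEStronglyMeasurable g μ) (hh : AEStronglyMeasurable h μ) (hp : 1 ≤ p)
    (hfgh : ∀ᵐ x ∂μ, ‖f x‖ ≤ c * (‖g x‖ + ‖h x‖)) :
    eLpNorm f p μ ≤ ENNReal.ofReal c * (eLpNorm g p μ + eLpNorm h p μ) := by
  calc eLpNorm f p μ ≤ ENNReal.ofReal c * eLpNorm (fun x => ‖g x‖ + ‖h x‖) p μ := by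
        refine eLpNorm_le_mul_eLpNorm_of_ae_le_mul (hfgh.mono fun x hx => ?_) p
        rwa [norm_of_nonneg (by positivity)]
    _ ≤ ENNReal.ofReal c * (eLpNorm g p μ + eLpNorm h p μ) := by
        gcongr
        rw [← eLpNorm_norm g, ← eLpNorm_norm h]
        exact eLpNorm_add_le hg.norm hh.norm hp

theorem two_fluid_pressure_L2_estimate_general
    (γp γm M : ℝ) (hγp : 1 ≤ γp) (hγpm : γp ≤ γm)
    {X : Type*} [MeasurableSpace X] (μ : Measure X) :
    ∃ C : ℝ, 0 < C ∧
      ∀ R Q R' Q' Z Z' : X → ℝ,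
        Measurable R → Measurable Q → Measurable R' → Measurable Q' →
        (∀ x, R x ∈ Set.Icc 0 M) → (∀ x, Q x ∈ Set.Icc 0 M) →
        (∀ x, R' x ∈ Set.Icc 0 M) → (∀ x, Q' x ∈ Set.Icc 0 M) →
        (∀ x, 0 < R x + Q x) → (∀ x, 0 < R' x + Q' x) →
        (∀ x, R x ≤ Z x ∧ 0 < Z x ∧ (1 - R x / Z x) * Z x ^ (γp / γm) = Q x) →
        (∀ x, R' x ≤ Z' x ∧ 0 < Z' x ∧ (1 - R' x / Z' x) * Z' x ^ (γp / γm) = Q' x) →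
        eLpNorm (fun x => Z x ^ γp - Z' x ^ γp) 2 μ ≤
          ENNReal.ofReal C *
            (eLpNorm (fun x => R x - R' x) 2 μ + eLpNorm (fun x => Q x - Q' x) 2 μ) := by
  have hγ₀ : 0 < γp / γm := div_pos (by linarith) (by linarith)
  have hγ₁ : γp / γm ≤ 1 := div_le_one_of_le₀ hγpm (by linarith)
  refine ⟨pressureLipschitzConst γp (γp / γm) M,
    pressureLipschitzConst_pos M (by linarith) hγ₀, ?_⟩
  intro R Q R' Q' Z Z' hR hQ hR' hQ' hRM hQM hR'M hQ'M _ _ hZ hZ'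
  refine eLpNorm_le_ofReal_mul_add (hR.sub hR').aestronglyMeasurable
    (hQ.sub hQ').aestronglyMeasurable one_le_two (Filter.Eventually.of_forall fun x => ?_)
  exact abs_rpow_sub_rpow_le_of_pressure hγ₀ hγ₁ hγp (hRM x) (hQM x) (hR'M x) (hQ'M x)
    (hZ x).2.1 (hZ x).2.2 (hZ' x).2.1 (hZ' x).2.2

/-- L² estimate on the pressure difference: for `1 ≤ γ₊ ≤ γ₋`, `γ = γ₊/γ₋`, `M > 0`
and a finite measure space `(X, μ)`, there is a constant `C = C(M, γ₊, γ₋) > 0`,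
independent of the functions, such that for all measurable `R, Q, R̃, Q̃ : X → [0,M]`
with pointwise positive sums and associated pressure variables `Z, Z̃`,
`‖Z^{γ₊} − Z̃^{γ₊}‖_{L²(μ)} ≤ C (‖R − R̃‖_{L²(μ)} + ‖Q − Q̃‖_{L²(μ)})`. -/
theorem two_fluid_pressure_L2_estimate
    (γp γm M : ℝ) (hγp : 1 ≤ γp) (hγpm : γp ≤ γm) (hM : 0 < M)
    {X : Type*} [MeasurableSpace X] (μ : Measure X) [IsFiniteMeasure μ] :
    ∃ C : ℝ, 0 < C ∧
      ∀ R Q R' Q' Z Z' : X → ℝ,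
        Measurable R → Measurable Q → Measurable R' → Measurable Q' →
        (∀ x, R x ∈ Set.Icc 0 M) → (∀ x, Q x ∈ Set.Icc 0 M) →
        (∀ x, R' x ∈ Set.Icc 0 M) → (∀ x, Q' x ∈ Set.Icc 0 M) →
        (∀ x, 0 < R x + Q x) → (∀ x, 0 < R' x + Q' x) →
        (∀ x, R x ≤ Z x ∧ 0 < Z x ∧ (1 - R x / Z x) * Z x ^ (γp / γm) = Q x) →
        (∀ x, R' x ≤ Z' x ∧ 0 < Z' x ∧ (1 - R' x / Z' x) * Z' x ^ (γp / γm) = Q' x) →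
        eLpNorm (fun x => Z x ^ γp - Z' x ^ γp) 2 μ ≤
          ENNReal.ofReal C *
            (eLpNorm (fun x => R x - R' x) 2 μ + eLpNorm (fun x => Q x - Q' x) 2 μ) :=
  two_fluid_pressure_L2_estimate_general γp γm M hγp hγpm μ
end

section
/- Let (X, μ) be a probability space. Let R, Q, R̃, Q̃ : X → ℝ be nonnegative integrable functions with R, Q essentially bounded, and let u, ũ : X → ℝ³ be such that u, ũ, (R+Q)u, (R̃+Q̃)ũ are integrable and ũ − ∫_X ũ dμ, u − ∫_X u dμ, R − R̃, Q − Q̃ are in L². Set m = ∫_X (R+Q) dμ and assume m > 0. Assume ∫_X (R − R̃) dμ = 0, ∫_X (Q − Q̃) dμ = 0, and ∫_X (R+Q) u dμ = ∫_X (R̃+Q̃) ũ dμ. Then, writing U = u − ũ, one has | ∫_X U dμ | ≤ (1/m) [ ( ‖R‖_{L^∞} + ‖Q‖_{L^∞} ) ‖ U − ∫_X U dμ ‖_{L²(μ)} + ( ‖ R − R̃ ‖_{L²(μ)} + ‖ Q − Q̃ ‖_{L²(μ)} ) ‖ ũ − ∫_X ũ dμ ‖_{L²(μ)} ]. -/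
/-!
Write `ρ = R + Q`, `ρ̃ = R̃ + Q̃`, `U = u − ũ`. Since `∫ ρ u = ∫ ρ̃ ũ`, the momentum of the
difference is `∫ ρ U = −∫ (ρ − ρ̃) ũ`, and because `ρ − ρ̃` has mean zero, `ũ` may be replaced by
its oscillation there. Subtracting `(∫ ρ) (∫ U) = m ∫ U` from `∫ ρ U` gives
`m ∫ U = −∫ ρ (U − ∫ U) − ∫ (ρ − ρ̃) (ũ − ∫ ũ)`,
and Hölder's inequality (`L^∞ × L¹` with `‖·‖₁ ≤ ‖·‖₂` on a probability space, and `L² × L²`)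
bounds the two terms.
-/

open MeasureTheory
open scoped ENNReal

namespace MeasureTheory

variable {X E : Type*} [MeasurableSpace X] {μ : Measure X} [NormedAddCommGroup E]

theorem memLp_sub_const_iff [IsFiniteMeasure μ] {f : X → E} {c : E} {p : ℝ≥0∞} :
    MemLp (fun x => f x - c) p μ ↔ MemLp f p μ :=
  ⟨fun h => by simpa [Pi.add_def] using h.add (memLp_const c), fun h => h.sub (memLp_const c)⟩

theorem lpNorm_le_lpNorm_of_exponent_le [IsProbabilityMeasure μ] {f : X → E} {p q : ℝ≥0∞}
    (hpq : p ≤ q) (hf : MemLp f q μ) : lpNorm f p μ ≤ lpNorm f q μ := by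
  rw [← toReal_eLpNorm hf.1, ← toReal_eLpNorm hf.1]
  exact ENNReal.toReal_mono hf.eLpNorm_ne_top (eLpNorm_le_eLpNorm_of_exponent_le hpq hf.1)

variable [NormedSpace ℝ E]

theorem norm_integral_smul_le_lpNorm_mul_lpNorm {p q : ℝ≥0∞} [ENNReal.HolderTriple p q 1]
    {φ : X → ℝ} {f : X → E} (hφ : MemLp φ p μ) (hf : MemLp f q μ) :
    ‖∫ x, φ x • f x ∂μ‖ ≤ lpNorm φ p μ * lpNorm f q μ := by
  have hφf : MemLp (φ • f) 1 μ := hf.smul hφ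
  calc ‖∫ x, φ x • f x ∂μ‖ ≤ ∫ x, ‖φ x • f x‖ ∂μ := norm_integral_le_integral_norm _
    _ = lpNorm (φ • f) 1 μ := (lpNorm_one_eq_integral_norm hφf.1).symm
    _ ≤ lpNorm φ p μ * lpNorm f q μ := by
      rw [← toReal_eLpNorm hφf.1, ← toReal_eLpNorm hφ.1, ← toReal_eLpNorm hf.1,
        ← ENNReal.toReal_mul]
      exact ENNReal.toReal_mono (ENNReal.mul_ne_top hφ.eLpNorm_ne_top hf.eLpNorm_ne_top)
        (eLpNorm_smul_le_mul_eLpNorm hf.1 hφ.1)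

theorem integral_smul_sub_integral [CompleteSpace E] {ρ : X → ℝ} {f : X → E}
    (hρ : Integrable ρ μ) (hρf : Integrable (fun x => ρ x • f x) μ) :
    ∫ x, ρ x • (f x - ∫ y, f y ∂μ) ∂μ = ∫ x, ρ x • f x ∂μ - (∫ x, ρ x ∂μ) • ∫ y, f y ∂μ := by
  simp_rw [smul_sub]
  rw [integral_sub hρf (hρ.smul_const _), integral_smul_const]

variable {ρ ρ' : X → ℝ} {u u' : X → E}

theorem integral_smul_sub_eq_neg_integral_sub_smul [IsFiniteMeasure μ] (hρ : MemLp ρ ∞ μ)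
    (hδ : MemLp (fun x => ρ x - ρ' x) 2 μ) (hu : MemLp u 2 μ) (hu' : MemLp u' 2 μ)
    (hmom : ∫ x, ρ x • u x ∂μ = ∫ x, ρ' x • u' x ∂μ) :
    ∫ x, ρ x • (u x - u' x) ∂μ = -∫ x, (ρ x - ρ' x) • u' x ∂μ := by
  have hρu : Integrable (fun x => ρ x • u x) μ := (hu.smul hρ).integrable one_le_two
  have hρu' : Integrable (fun x => ρ x • u' x) μ := (hu'.smul hρ).integrable one_le_two
  have hδu' : Integrable (fun x => (ρ x - ρ' x) • u' x) μ :=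
    memLp_one_iff_integrable.1 (hu'.smul hδ)
  have hρ'u' : Integrable (fun x => ρ' x • u' x) μ :=
    (hρu'.sub hδu').congr (.of_forall fun x => by simp [sub_smul])
  simp_rw [smul_sub, sub_smul]
  rw [integral_sub hρu hρu', integral_sub hρu' hρ'u', hmom]
  abel

theorem integral_smul_integral_sub_eq [CompleteSpace E] [IsFiniteMeasure μ] (hρ : MemLp ρ ∞ μ)
    (hδ : MemLp (fun x => ρ x - ρ' x) 2 μ) (hu : MemLp u 2 μ) (hu' : MemLp u' 2 μ)
    (hmass : ∫ x, (ρ x - ρ' x) ∂μ = 0)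
    (hmom : ∫ x, ρ x • u x ∂μ = ∫ x, ρ' x • u' x ∂μ) :
    (∫ x, ρ x ∂μ) • ∫ x, (u x - u' x) ∂μ =
      -(∫ x, ρ x • (u x - u' x - ∫ y, (u y - u' y) ∂μ) ∂μ +
        ∫ x, (ρ x - ρ' x) • (u' x - ∫ y, u' y ∂μ) ∂μ) := by
  rw [integral_smul_sub_integral (f := fun x => u x - u' x) (hρ.integrable le_top)
      (((hu.sub hu').smul hρ).integrable one_le_two),
    integral_smul_sub_integral (hδ.integrable one_le_two)
      (memLp_one_iff_integrable.1 (hu'.smul hδ)),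
    hmass, zero_smul, sub_zero, integral_smul_sub_eq_neg_integral_sub_smul hρ hδ hu hu' hmom]
  abel

theorem norm_integral_smul_integral_sub_le [CompleteSpace E] [IsProbabilityMeasure μ]
    (hρ : MemLp ρ ∞ μ) (hδ : MemLp (fun x => ρ x - ρ' x) 2 μ) (hu : MemLp u 2 μ)
    (hu' : MemLp u' 2 μ) (hmass : ∫ x, (ρ x - ρ' x) ∂μ = 0)
    (hmom : ∫ x, ρ x • u x ∂μ = ∫ x, ρ' x • u' x ∂μ) :
    ‖(∫ x, ρ x ∂μ) • ∫ x, (u x - u' x) ∂μ‖ ≤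
      lpNorm ρ ∞ μ * lpNorm (fun x => u x - u' x - ∫ y, (u y - u' y) ∂μ) 2 μ +
        lpNorm (fun x => ρ x - ρ' x) 2 μ * lpNorm (fun x => u' x - ∫ y, u' y ∂μ) 2 μ := by
  have hw : MemLp (fun x => u x - u' x - ∫ y, (u y - u' y) ∂μ) 2 μ :=
    memLp_sub_const_iff.2 (hu.sub hu')
  rw [integral_smul_integral_sub_eq hρ hδ hu hu' hmass hmom, norm_neg]
  refine (norm_add_le _ _).trans (add_le_add ?_
    (norm_integral_smul_le_lpNorm_mul_lpNorm hδ (memLp_sub_const_iff.2 hu')))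
  calc _ ≤ lpNorm ρ ∞ μ * lpNorm (fun x => u x - u' x - ∫ y, (u y - u' y) ∂μ) 1 μ :=
        norm_integral_smul_le_lpNorm_mul_lpNorm hρ (hw.mono_exponent one_le_two)
    _ ≤ _ := mul_le_mul_of_nonneg_left (lpNorm_le_lpNorm_of_exponent_le one_le_two hw)
        lpNorm_nonneg

end MeasureTheory

theorem velocity_mean_estimate_general
    {X : Type*} [MeasurableSpace X] (μ : Measure X) [IsProbabilityMeasure μ]
    (R Q R' Q' : X → ℝ) (u u' : X → EuclideanSpace ℝ (Fin 3))
    (hRbdd : MemLp R ⊤ μ) (hQbdd : MemLp Q ⊤ μ)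
    (hu'osc : MemLp (fun x => u' x - ∫ y, u' y ∂μ) 2 μ)
    (huosc : MemLp (fun x => u x - ∫ y, u y ∂μ) 2 μ)
    (hRdiff : MemLp (fun x => R x - R' x) 2 μ)
    (hQdiff : MemLp (fun x => Q x - Q' x) 2 μ)
    (m : ℝ) (hm : m = ∫ x, (R x + Q x) ∂μ) (hmpos : 0 < m)
    (hmassR : ∫ x, (R x - R' x) ∂μ = 0)
    (hmassQ : ∫ x, (Q x - Q' x) ∂μ = 0)
    (hmom : ∫ x, (R x + Q x) • u x ∂μ = ∫ x, (R' x + Q' x) • u' x ∂μ) :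
    ‖∫ x, (u x - u' x) ∂μ‖ ≤
      (1 / m) *
        (((eLpNorm R ⊤ μ).toReal + (eLpNorm Q ⊤ μ).toReal) *
            (eLpNorm (fun x => (u x - u' x) - ∫ y, (u y - u' y) ∂μ) 2 μ).toReal +
          ((eLpNorm (fun x => R x - R' x) 2 μ).toReal +
              (eLpNorm (fun x => Q x - Q' x) 2 μ).toReal) *
            (eLpNorm (fun x => u' x - ∫ y, u' y ∂μ) 2 μ).toReal) := by
  have hu : MemLp u 2 μ := memLp_sub_const_iff.1 huosc
  have hu' : MemLp u' 2 μ := memLp_sub_const_iff.1 hu'osc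
  have hw : MemLp (fun x => u x - u' x - ∫ y, (u y - u' y) ∂μ) 2 μ :=
    memLp_sub_const_iff.2 (hu.sub hu')
  have hδ_eq : (fun x => R x + Q x - (R' x + Q' x)) =
      (fun x => R x - R' x) + fun x => Q x - Q' x := by
    ext x; simp only [Pi.add_apply]; ring
  have hmass : ∫ x, (R x + Q x - (R' x + Q' x)) ∂μ = 0 := by
    rw [hδ_eq, integral_add' (hRdiff.integrable one_le_two) (hQdiff.integrable one_le_two),
      hmassR, hmassQ, add_zero]
  have hbound := norm_integral_smul_integral_sub_le (ρ := fun x => R x + Q x) (hRbdd.add hQbdd)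
    (hδ_eq ▸ hRdiff.add hQdiff) hu hu' hmass hmom
  rw [← hm, norm_smul, Real.norm_of_nonneg hmpos.le, hδ_eq] at hbound
  rw [toReal_eLpNorm hRbdd.1, toReal_eLpNorm hQbdd.1, toReal_eLpNorm hRdiff.1,
    toReal_eLpNorm hQdiff.1, toReal_eLpNorm hu'osc.1,
    toReal_eLpNorm hw.1, one_div, le_inv_mul_iff₀ hmpos]
  exact hbound.trans (add_le_add
    (mul_le_mul_of_nonneg_right (lpNorm_add_le hRbdd le_top) lpNorm_nonneg)
    (mul_le_mul_of_nonneg_right (lpNorm_add_le hRdiff one_le_two) lpNorm_nonneg))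

/-- Mean-value estimate for the velocity difference (Lemma 2.3 of the paper): on a
probability space, under conservation of total mass and momentum,
`|∫ U dμ| ≤ (1/m) [ (‖R‖_∞ + ‖Q‖_∞) ‖U − ∫U‖_{L²} + (‖R−R̃‖_{L²} + ‖Q−Q̃‖_{L²}) ‖ũ − ∫ũ‖_{L²} ]`,
where `U = u − ũ` and `m = ∫ (R+Q) dμ > 0`. -/
theorem velocity_mean_estimate
    {X : Type*} [MeasurableSpace X] (μ : Measure X) [IsProbabilityMeasure μ]
    (R Q R' Q' : X → ℝ) (u u' : X → EuclideanSpace ℝ (Fin 3))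
    (hRpos : ∀ x, 0 ≤ R x) (hQpos : ∀ x, 0 ≤ Q x)
    (hR'pos : ∀ x, 0 ≤ R' x) (hQ'pos : ∀ x, 0 ≤ Q' x)
    (hR : Integrable R μ) (hQ : Integrable Q μ)
    (hR' : Integrable R' μ) (hQ' : Integrable Q' μ)
    (hRbdd : MemLp R ⊤ μ) (hQbdd : MemLp Q ⊤ μ)
    (hu : Integrable u μ) (hu' : Integrable u' μ)
    (hRQu : Integrable (fun x => (R x + Q x) • u x) μ)
    (hR'Q'u' : Integrable (fun x => (R' x + Q' x) • u' x) μ)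
    (hu'osc : MemLp (fun x => u' x - ∫ y, u' y ∂μ) 2 μ)
    (huosc : MemLp (fun x => u x - ∫ y, u y ∂μ) 2 μ)
    (hRdiff : MemLp (fun x => R x - R' x) 2 μ)
    (hQdiff : MemLp (fun x => Q x - Q' x) 2 μ)
    (m : ℝ) (hm : m = ∫ x, (R x + Q x) ∂μ) (hmpos : 0 < m)
    (hmassR : ∫ x, (R x - R' x) ∂μ = 0)
    (hmassQ : ∫ x, (Q x - Q' x) ∂μ = 0)
    (hmom : ∫ x, (R x + Q x) • u x ∂μ = ∫ x, (R' x + Q' x) • u' x ∂μ) :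
    ‖∫ x, (u x - u' x) ∂μ‖ ≤
      (1 / m) *
        (((eLpNorm R ⊤ μ).toReal + (eLpNorm Q ⊤ μ).toReal) *
            (eLpNorm (fun x => (u x - u' x) - ∫ y, (u y - u' y) ∂μ) 2 μ).toReal +
          ((eLpNorm (fun x => R x - R' x) 2 μ).toReal +
              (eLpNorm (fun x => Q x - Q' x) 2 μ).toReal) *
            (eLpNorm (fun x => u' x - ∫ y, u' y ∂μ) 2 μ).toReal) :=
  velocity_mean_estimate_general μ R Q R' Q' u u' hRbdd hQbdd hu'osc huosc hRdiff hQdiff m hm hmpos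
    hmassR hmassQ hmom
end
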